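/- arXiv:1408.6589 — 2 statements merged into one kernel-verified Lean document; each statement's English description precedes it below -/
import Mathlib

section
/- The variance of the sampling estimator ρ_n satisfies Var[ρ_n] = Σ_{r=1}^{K} ((n−1)^{K−r} / n^K) · Σ_{S ⊆ {1,…,K}, |S| = r} σ_S², where σ_S² = |Λ(S)|⁻¹ Σ_{l ∈ Λ(S)} (ρ_S(l) − ρ)². -/
open MeasureTheory ProbabilityTheory Finset

noncomputable section

/-- `Λ`, the set of block-index tuples. -/
def Lam (K : ℕ) (m : Fin K → ℕ) : Type := ∀ k, Fin (m k)

instance (K : ℕ) (m : Fin K → ℕ) : Fintype (Lam K m) := by unfold Lam; infer_instance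
instance (K : ℕ) (m : Fin K → ℕ) : DecidableEq (Lam K m) := by unfold Lam; infer_instance

/-- `Λ(S)`, block-index tuples restricted to the coordinates in `S`. -/
def LamS (K : ℕ) (m : Fin K → ℕ) (S : Finset (Fin K)) : Type := ∀ k : S, Fin (m k)

instance (K : ℕ) (m : Fin K → ℕ) (S : Finset (Fin K)) : Fintype (LamS K m S) := by
  unfold LamS; infer_instance

instance (K : ℕ) (m : Fin K → ℕ) (S : Finset (Fin K)) (l : LamS K m S) :
    DecidablePred (fun b : Lam K m => ∀ k : S, b ↑k = l k) :=
  fun _ => @Fintype.decidableForallFintype _ _ (fun _ => instDecidableEqFin _ _ _) _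

/-- The mean `ρ = |Λ|⁻¹ Σ_{b∈Λ} ρ_B(b)`. -/
def lamMean (K : ℕ) (m : Fin K → ℕ) (ρB : Lam K m → ℝ) : ℝ :=
  (Fintype.card (Lam K m) : ℝ)⁻¹ * ∑ b, ρB b

/-- `ρ_S(l)`: the average of `ρ_B(b)` over all `b ∈ Λ` whose coordinates in `S` equal `l`. -/
def rhoS (K : ℕ) (m : Fin K → ℕ) (ρB : Lam K m → ℝ) (S : Finset (Fin K))
    (l : LamS K m S) : ℝ :=
  ((Finset.univ.filter (fun b : Lam K m => ∀ k : S, b ↑k = l k)).card : ℝ)⁻¹ *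
    ∑ b ∈ Finset.univ.filter (fun b : Lam K m => ∀ k : S, b ↑k = l k), ρB b

/-- `σ_S² = |Λ(S)|⁻¹ Σ_{l∈Λ(S)} (ρ_S(l) − ρ)²`. -/
def sigmaSq (K : ℕ) (m : Fin K → ℕ) (ρB : Lam K m → ℝ) (S : Finset (Fin K)) : ℝ :=
  (Fintype.card (LamS K m S) : ℝ)⁻¹ *
    ∑ l : LamS K m S, (rhoS K m ρB S l - lamMean K m ρB) ^ 2

/-- The sample space `Ω = Π_{k=1}^{K} Π_{i=1}^{n} Fin m_k`. -/
def Samp (K n : ℕ) (m : Fin K → ℕ) : Type := ∀ k : Fin K, Fin n → Fin (m k)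

instance (K n : ℕ) (m : Fin K → ℕ) : Fintype (Samp K n m) := by unfold Samp; infer_instance
instance (K n : ℕ) (m : Fin K → ℕ) : MeasurableSpace (Samp K n m) := ⊤

/-- The uniform probability measure on the sample space. -/
def unif (K n : ℕ) (m : Fin K → ℕ) : Measure (Samp K n m) :=
  (Fintype.card (Samp K n m) : ENNReal)⁻¹ • Measure.count

/-- The sampling estimator `ρ_n`. -/
def est (K n : ℕ) (m : Fin K → ℕ) (ρB : Lam K m → ℝ) (ω : Samp K n m) : ℝ :=
  ((n : ℝ) ^ K)⁻¹ * ∑ i : Fin K → Fin n, ρB fun k => ω k (i k)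

section Helpers
variable {α : Type*} [Fintype α] [DecidableEq α]

/-- Functions with prescribed values on `s` are equivalent to functions on the complement. -/
def fixEquiv (β : α → Type*) (s : Finset α) (g : ∀ x : s, β x) :
    {f : ∀ a, β a // ∀ x : s, f x = g x} ≃ (∀ x : {x // x ∉ s}, β x) where
  toFun f x := f.1 x
  invFun h := ⟨fun a => if ha : a ∈ s then g ⟨a, ha⟩ else h ⟨a, ha⟩, fun x => dif_pos x.2⟩
  left_inv f := Subtype.ext <| funext fun a => by
    dsimp only
    split_ifs with ha
    · exact (f.2 ⟨a, ha⟩).symm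
    · rfl
  right_inv h := funext fun x => dif_neg x.2

lemma card_fix (β : α → Type*) [∀ a, Fintype (β a)]
    (s : Finset α) (g : ∀ x : s, β x)
    [DecidablePred (fun f : ∀ a, β a => ∀ x : s, f x = g x)] :
    (univ.filter fun f : ∀ a, β a => ∀ x : s, f x = g x).card
      = ∏ x : {x : α // x ∉ s}, Fintype.card (β x) := by
  rw [← Fintype.card_subtype, Fintype.card_congr (fixEquiv β s g), Fintype.card_pi]

lemma count_one {n M : ℕ} (x : Fin n) (a : Fin M) :
    (univ.filter fun f : Fin n → Fin M => f x = a).card = M ^ (n - 1) := by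
  have h : (univ.filter fun f : Fin n → Fin M => f x = a)
      = univ.filter fun f : Fin n → Fin M =>
          ∀ z : ({x} : Finset (Fin n)), f z = (fun _ => a) z := by
    apply filter_congr
    intro f _
    simp only [eq_iff_iff]
    constructor
    · rintro hf ⟨z, hz⟩
      simp only [mem_singleton] at hz
      subst hz; exact hf
    · intro hf; exact hf ⟨x, mem_singleton_self x⟩
  rw [h]
  rw [card_fix (fun _ : Fin n => Fin M) ({x} : Finset (Fin n)) (fun _ => a)]
  simp only [Fintype.card_fin, prod_const, Finset.card_univ]
  congr 1
  rw [Fintype.card_subtype_compl, Fintype.card_fin, Fintype.card_coe]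
  simp

lemma count_two {n M : ℕ} (x y : Fin n) (hxy : x ≠ y) (a b : Fin M) :
    (univ.filter fun f : Fin n → Fin M => f x = a ∧ f y = b).card = M ^ (n - 2) := by
  have h : (univ.filter fun f : Fin n → Fin M => f x = a ∧ f y = b)
      = univ.filter fun f : Fin n → Fin M =>
          ∀ z : ({x, y} : Finset (Fin n)),
            f z = (fun z : ({x, y} : Finset (Fin n)) => if (z : Fin n) = x then a else b) z := by
    apply filter_congr
    intro f _
    simp only [eq_iff_iff]
    constructor
    · rintro ⟨h1, h2⟩ ⟨z, hz⟩
      simp only [mem_insert, mem_singleton] at hz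
      rcases hz with rfl | rfl
      · simpa using h1
      · simp only
        rw [if_neg (Ne.symm hxy)]
        exact h2
    · intro hf
      refine ⟨?_, ?_⟩
      · have := hf ⟨x, by simp⟩
        simpa using this
      · have := hf ⟨y, by simp⟩
        simpa [Ne.symm hxy] using this
  rw [h, card_fix]
  simp only [Fintype.card_fin, prod_const, Finset.card_univ]
  congr 1
  rw [Fintype.card_subtype_compl, Fintype.card_fin, Fintype.card_coe, card_pair hxy]

def diagEquiv (n : ℕ) : {q : Fin n × Fin n // q.1 = q.2} ≃ Fin n where
  toFun q := q.1.1
  invFun a := ⟨(a, a), rfl⟩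
  left_inv q := by
    rcases q with ⟨⟨u, v⟩, h⟩
    simp only at h
    subst h; rfl
  right_inv a := rfl

lemma card_diag (n : ℕ) : Fintype.card {q : Fin n × Fin n // q.1 = q.2} = n := by
  rw [Fintype.card_congr (diagEquiv n), Fintype.card_fin]

lemma card_offdiag (n : ℕ) : Fintype.card {q : Fin n × Fin n // ¬ q.1 = q.2} = n ^ 2 - n := by
  rw [Fintype.card_subtype_compl, card_diag, Fintype.card_prod, Fintype.card_fin, sq]

end Helpers

section Fibers
variable {K n : ℕ} {m : Fin K → ℕ}

instance (K : ℕ) (m : Fin K → ℕ) (S : Finset (Fin K)) : DecidableEq (LamS K m S) := by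
  unfold LamS; infer_instance

instance decSampPairLocal (K n : ℕ) (m : Fin K → ℕ) (i j : Fin K → Fin n) (a b : Lam K m) :
    DecidablePred (fun ω : Samp K n m => ∀ k, ω k (i k) = a k ∧ ω k (j k) = b k) :=
  fun _ => @Fintype.decidableForallFintype _ _
    (fun _ => @instDecidableAnd _ _ (instDecidableEqFin _ _ _) (instDecidableEqFin _ _ _)) _

instance decSampEqLocal (K n : ℕ) (m : Fin K → ℕ) (i : Fin K → Fin n) (a : Lam K m) :
    DecidablePred (fun ω : Samp K n m => (fun k => ω k (i k) : Lam K m) = a) :=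
  fun ω => instDecidableEqLam K m (fun k => ω k (i k)) a

instance decSampProdEqLocal (K n : ℕ) (m : Fin K → ℕ) (i j : Fin K → Fin n)
    (p : Lam K m × Lam K m) :
    DecidablePred (fun ω : Samp K n m =>
      ((fun k => ω k (i k) : Lam K m), (fun k => ω k (j k) : Lam K m)) = p) :=
  fun ω => instDecidableEqProd ((fun k => ω k (i k) : Lam K m), (fun k => ω k (j k) : Lam K m)) p

instance decLamSEqLocal (K : ℕ) (m : Fin K → ℕ) (S : Finset (Fin K)) (l : LamS K m S) :
    DecidablePred (fun b : Lam K m => (fun k => b ↑k : LamS K m S) = l) :=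
  fun b => instDecidableEqLamS K m S (fun k => b ↑k) l

lemma card_sampFiber (i j : Fin K → Fin n) (a b : Lam K m) :
    (univ.filter fun ω : Samp K n m => ∀ k, ω k (i k) = a k ∧ ω k (j k) = b k).card
      = ∏ k, (univ.filter fun f : Fin n → Fin (m k) => f (i k) = a k ∧ f (j k) = b k).card := by
  rw [← Fintype.card_subtype]
  have e : {ω : Samp K n m // ∀ k, ω k (i k) = a k ∧ ω k (j k) = b k}
      ≃ ∀ k, {f : Fin n → Fin (m k) // f (i k) = a k ∧ f (j k) = b k} :=
    @Equiv.subtypePiEquivPi (Fin K) (fun k => Fin n → Fin (m k))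
      (fun k f => f (i k) = a k ∧ f (j k) = b k)
  rw [Fintype.card_congr e, Fintype.card_pi]
  exact Finset.prod_congr rfl fun k _ => Fintype.card_subtype _

lemma card_lamFiber (S : Finset (Fin K)) (l : LamS K m S) :
    (univ.filter fun b : Lam K m => ∀ k : S, b ↑k = l k).card
      = ∏ x : {x : Fin K // x ∉ S}, m x := by
  exact (@card_fix _ _ _ (fun k : Fin K => Fin (m k)) _ S l
    (inferInstanceAs (DecidablePred fun b : Lam K m => ∀ k : S, b ↑k = l k))).trans
    (Finset.prod_congr rfl fun k _ => Fintype.card_fin _)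

lemma card_lam : Fintype.card (Lam K m) = ∏ k, m k := by
  unfold Lam
  rw [Fintype.card_pi]
  exact Finset.prod_congr rfl fun k _ => Fintype.card_fin _

lemma card_lamS (S : Finset (Fin K)) :
    Fintype.card (LamS K m S) = ∏ x : {x : Fin K // x ∈ S}, m x := by
  unfold LamS
  rw [Fintype.card_pi]
  exact Finset.prod_congr rfl fun k _ => Fintype.card_fin _

lemma card_samp : Fintype.card (Samp K n m) = ∏ k, m k ^ n := by
  unfold Samp
  rw [Fintype.card_pi]
  exact Finset.prod_congr rfl fun k _ => by rw [Fintype.card_fun, Fintype.card_fin, Fintype.card_fin]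

end Fibers

section Moments
variable {K n : ℕ} {m : Fin K → ℕ} (ρB : Lam K m → ℝ)

/-- `T S l`: sum of `ρB` over the fiber of `l`. -/
def Tsum (S : Finset (Fin K)) (l : LamS K m S) : ℝ :=
  ∑ b ∈ Finset.univ.filter (fun b : Lam K m => ∀ k : S, b ↑k = l k), ρB b

lemma sum_Tsum (S : Finset (Fin K)) :
    ∑ l : LamS K m S, Tsum ρB S l = ∑ b, ρB b := by
  rw [← Finset.sum_fiberwise univ
    (fun b : Lam K m => (fun k => b ↑k : LamS K m S)) ρB]
  apply Finset.sum_congr rfl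
  intro l _
  apply Finset.sum_congr _ (fun _ _ => rfl)
  apply Finset.filter_congr
  intro b _
  exact funext_iff.symm

lemma rhoS_eq (S : Finset (Fin K)) (l : LamS K m S) :
    rhoS K m ρB S l = ((∏ x : {x : Fin K // x ∉ S}, m x : ℕ) : ℝ)⁻¹ * Tsum ρB S l := by
  rw [rhoS, card_lamFiber]
  rfl

lemma c_mul_d (S : Finset (Fin K)) :
    Fintype.card (LamS K m S) * (∏ x : {x : Fin K // x ∉ S}, m x)
      = Fintype.card (Lam K m) := by
  have e : Lam K m ≃ (LamS K m S) × (∀ x : {x : Fin K // x ∉ S}, Fin (m x)) :=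
    @Equiv.piEquivPiSubtypeProd (Fin K) (· ∈ S) (fun k => Fin (m k)) _
  rw [Fintype.card_congr e, Fintype.card_prod, Fintype.card_pi]
  congr 1
  exact Finset.prod_congr rfl fun k _ => (Fintype.card_fin _).symm

lemma sum_pairs (S : Finset (Fin K)) :
    ∑ p ∈ univ.filter (fun p : Lam K m × Lam K m => ∀ k : S, p.1 ↑k = p.2 ↑k),
        ρB p.1 * ρB p.2
      = ∑ l : LamS K m S, (Tsum ρB S l) ^ 2 := by
  rw [Finset.sum_filter, Fintype.sum_prod_type]
  have step1 : ∀ a : Lam K m,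
      (∑ b : Lam K m, if (∀ k : S, a ↑k = b ↑k) then ρB a * ρB b else 0)
        = ρB a * Tsum ρB S (fun k => a ↑k) := by
    intro a
    have hrhs : ρB a * Tsum ρB S (fun k => a ↑k)
        = ∑ b : Lam K m, if (∀ k : S, b ↑k = a ↑k) then ρB a * ρB b else 0 := by
      delta Tsum
      rw [Finset.mul_sum, Finset.sum_filter]
    rw [hrhs]
    apply Finset.sum_congr rfl
    intro b _
    exact if_congr (forall_congr' fun k => eq_comm) rfl rfl
  rw [Finset.sum_congr rfl fun a _ => step1 a]
  rw [← Finset.sum_fiberwise univ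
    (fun a : Lam K m => (fun k => a ↑k : LamS K m S))
    (fun a => ρB a * Tsum ρB S (fun k => a ↑k))]
  apply Finset.sum_congr rfl
  intro l _
  have hmem : ∀ a ∈ univ.filter (fun a : Lam K m =>
      (fun k => a ↑k : LamS K m S) = l),
      ρB a * Tsum ρB S (fun k => a ↑k) = ρB a * Tsum ρB S l := by
    intro a ha
    rw [(Finset.mem_filter.mp ha).2]
  rw [Finset.sum_congr rfl hmem, ← Finset.sum_mul]
  rw [show (∑ a ∈ univ.filter (fun a : Lam K m =>
      (fun k => a ↑k : LamS K m S) = l), ρB a) = Tsum ρB S l from by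
    apply Finset.sum_congr _ (fun _ _ => rfl)
    apply Finset.filter_congr
    intro b _
    exact funext_iff]
  rw [sq]

lemma sum_samp_one (i : Fin K → Fin n) :
    ∑ ω : Samp K n m, ρB (fun k => ω k (i k))
      = ((∏ k, m k ^ (n - 1) : ℕ) : ℝ) * ∑ b, ρB b := by
  rw [← Finset.sum_fiberwise univ
    (fun ω : Samp K n m => (fun k => ω k (i k) : Lam K m))
    (fun ω => ρB (fun k => ω k (i k)))]
  have hcard : ∀ a : Lam K m,
      (univ.filter fun ω : Samp K n m =>
        (fun k => ω k (i k) : Lam K m) = a).card = ∏ k, m k ^ (n - 1) := by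
    intro a
    rw [show (univ.filter fun ω : Samp K n m =>
        (fun k => ω k (i k) : Lam K m) = a)
      = univ.filter fun ω : Samp K n m =>
          ∀ k, ω k (i k) = a k ∧ ω k (i k) = a k from by
      apply Finset.filter_congr
      intro ω _
      exact funext_iff.trans (forall_congr' fun k => (and_self_iff).symm)]
    rw [card_sampFiber i i a a]
    apply Finset.prod_congr rfl
    intro k _
    rw [show (univ.filter fun f : Fin n → Fin (m k) => f (i k) = a k ∧ f (i k) = a k)
        = univ.filter fun f : Fin n → Fin (m k) => f (i k) = a k from by
      apply Finset.filter_congr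
      intro f _
      simp only [eq_iff_iff, and_self]]
    exact count_one _ _
  rw [Finset.mul_sum]
  apply Finset.sum_congr rfl
  intro a _
  have hmem : ∀ ω ∈ univ.filter (fun ω : Samp K n m =>
      (fun k => ω k (i k) : Lam K m) = a),
      ρB (fun k => ω k (i k)) = ρB a := by
    intro ω hω
    exact congrArg ρB (Finset.mem_filter.mp hω).2
  rw [Finset.sum_congr rfl hmem, Finset.sum_const, hcard a, nsmul_eq_mul]

lemma sum_samp_two (i j : Fin K → Fin n) (S : Finset (Fin K))
    (hS : ∀ k, i k = j k ↔ k ∈ S) :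
    ∑ ω : Samp K n m, ρB (fun k => ω k (i k)) * ρB (fun k => ω k (j k))
      = (((∏ k ∈ S, m k ^ (n - 1)) * ∏ k ∈ Sᶜ, m k ^ (n - 2) : ℕ) : ℝ)
          * ∑ l : LamS K m S, (Tsum ρB S l) ^ 2 := by
  set W : ℕ := (∏ k ∈ S, m k ^ (n - 1)) * ∏ k ∈ Sᶜ, m k ^ (n - 2) with hW
  rw [← Finset.sum_fiberwise univ
    (fun ω : Samp K n m => ((fun k => ω k (i k) : Lam K m),
                            (fun k => ω k (j k) : Lam K m)))
    (fun ω => ρB (fun k => ω k (i k)) * ρB (fun k => ω k (j k)))]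
  have hcard : ∀ p : Lam K m × Lam K m,
      (univ.filter fun ω : Samp K n m =>
        ((fun k => ω k (i k) : Lam K m), (fun k => ω k (j k) : Lam K m)) = p).card
        = if (∀ k : S, p.1 ↑k = p.2 ↑k) then W else 0 := by
    intro p
    rw [show (univ.filter fun ω : Samp K n m =>
        ((fun k => ω k (i k) : Lam K m), (fun k => ω k (j k) : Lam K m)) = p)
        = univ.filter fun ω : Samp K n m =>
            ∀ k, ω k (i k) = p.1 k ∧ ω k (j k) = p.2 k from by
      apply Finset.filter_congr
      intro ω _
      exact Prod.ext_iff.trans ((and_congr funext_iff funext_iff).trans forall_and.symm)]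
    rw [card_sampFiber i j p.1 p.2]
    by_cases hp : ∀ k : S, p.1 ↑k = p.2 ↑k
    · rw [if_pos hp, hW, ← Finset.prod_mul_prod_compl S]
      congr 1
      · apply Finset.prod_congr rfl
        intro k hk
        have hij : i k = j k := (hS k).mpr hk
        have hab : p.1 k = p.2 k := hp ⟨k, hk⟩
        rw [show (univ.filter fun f : Fin n → Fin (m k) =>
            f (i k) = p.1 k ∧ f (j k) = p.2 k)
          = univ.filter fun f : Fin n → Fin (m k) => f (i k) = p.1 k from by
          apply Finset.filter_congr
          intro f _
          simp only [eq_iff_iff, ← hij, ← hab, and_self]]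
        exact count_one _ _
      · apply Finset.prod_congr rfl
        intro k hk
        have hij : i k ≠ j k := fun h => (Finset.mem_compl.mp hk) ((hS k).mp h)
        exact count_two _ _ hij _ _
    · rw [if_neg hp]
      push_neg at hp
      obtain ⟨k, hk⟩ := hp
      apply Finset.prod_eq_zero (Finset.mem_univ (k : Fin K))
      rw [Finset.card_eq_zero, Finset.filter_eq_empty_iff]
      intro f _
      rintro ⟨h1, h2⟩
      apply hk
      rw [← h1, ← h2, (hS k).mpr k.2]
  have inner : ∀ p : Lam K m × Lam K m,
      (∑ ω ∈ univ.filter (fun ω : Samp K n m =>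
          ((fun k => ω k (i k) : Lam K m), (fun k => ω k (j k) : Lam K m)) = p),
        ρB (fun k => ω k (i k)) * ρB (fun k => ω k (j k)))
      = (if (∀ k : S, p.1 ↑k = p.2 ↑k) then (W : ℝ) else 0) * (ρB p.1 * ρB p.2) := by
    intro p
    have hmem : ∀ ω ∈ univ.filter (fun ω : Samp K n m =>
        ((fun k => ω k (i k) : Lam K m), (fun k => ω k (j k) : Lam K m)) = p),
        ρB (fun k => ω k (i k)) * ρB (fun k => ω k (j k)) = ρB p.1 * ρB p.2 := by
      intro ω hω
      have h := (Finset.mem_filter.mp hω).2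
      replace h := Prod.ext_iff.mp h
      rw [show (fun k => ω k (i k) : Lam K m) = p.1 from h.1,
          show (fun k => ω k (j k) : Lam K m) = p.2 from h.2]
    rw [Finset.sum_congr rfl hmem, Finset.sum_const, hcard p, nsmul_eq_mul]
    rw [apply_ite (Nat.cast : ℕ → ℝ), Nat.cast_zero]
  refine (Finset.sum_congr rfl fun p _ => inner p).trans ?_
  simp only [ite_mul, zero_mul]
  refine (Finset.sum_filter _ _).symm.trans ?_
  rw [← Finset.mul_sum]
  exact congrArg _ (sum_pairs ρB S)

end Moments

section Meas
variable (K n : ℕ) (m : Fin K → ℕ)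

instance : MeasurableSingletonClass (Samp K n m) :=
  ⟨fun _ => MeasurableSpace.measurableSet_top⟩

lemma samp_nonempty (hm : ∀ k, 1 ≤ m k) : Nonempty (Samp K n m) :=
  ⟨fun k _ => ⟨0, hm k⟩⟩

lemma samp_card_pos (hm : ∀ k, 1 ≤ m k) : 0 < Fintype.card (Samp K n m) :=
  @Fintype.card_pos _ _ (samp_nonempty K n m hm)

lemma unif_prob (hm : ∀ k, 1 ≤ m k) : IsProbabilityMeasure (unif K n m) := by
  constructor
  have hN : (Fintype.card (Samp K n m) : ENNReal) ≠ 0 :=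
    Nat.cast_ne_zero.mpr (Nat.pos_iff_ne_zero.mp (samp_card_pos K n m hm))
  rw [unif, Measure.smul_apply, smul_eq_mul, ← Finset.coe_univ,
    Measure.count_apply_finset, Finset.card_univ]
  exact ENNReal.inv_mul_cancel hN (ENNReal.natCast_ne_top _)

lemma lamS_card_pos (hm : ∀ k, 1 ≤ m k) (S : Finset (Fin K)) :
    0 < Fintype.card (LamS K m S) :=
  @Fintype.card_pos _ _ ⟨fun k => ⟨0, hm k⟩⟩

lemma lam_card_pos (hm : ∀ k, 1 ≤ m k) : 0 < Fintype.card (Lam K m) :=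
  @Fintype.card_pos _ _ ⟨fun k => ⟨0, hm k⟩⟩

lemma integral_unif (hm : ∀ k, 1 ≤ m k) (f : Samp K n m → ℝ) :
    ∫ ω, f ω ∂(unif K n m) = ((Fintype.card (Samp K n m) : ℝ))⁻¹ * ∑ ω, f ω := by
  haveI := unif_prob K n m hm
  rw [integral_fintype (f := f) Integrable.of_finite]
  rw [Finset.mul_sum]
  apply Finset.sum_congr rfl
  intro ω _
  rw [Measure.real, unif, Measure.smul_apply, Measure.count_singleton]
  simp [smul_eq_mul, ENNReal.toReal_inv]

lemma memℒp_est (hm : ∀ k, 1 ≤ m k) (ρB : Lam K m → ℝ) :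
    MemLp (est K n m ρB) 2 (unif K n m) := by
  haveI := unif_prob K n m hm
  haveI := samp_nonempty K n m hm
  obtain ⟨C, hC⟩ := Finite.exists_le (fun ω => ‖est K n m ρB ω‖)
  exact MemLp.of_bound ((measurable_of_finite _).aestronglyMeasurable) C
    (Filter.Eventually.of_forall hC)

end Meas

section Pairs
variable {K n : ℕ} {m : Fin K → ℕ}

lemma card_pairs (S : Finset (Fin K)) :
    (univ.filter fun p : (Fin K → Fin n) × (Fin K → Fin n) =>
        (univ.filter fun k => p.1 k = p.2 k) = S).card
      = (∏ _k ∈ S, n) * ∏ _k ∈ Sᶜ, (n ^ 2 - n) := by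
  classical
  rw [← Fintype.card_subtype]
  have emid : {p : (Fin K → Fin n) × (Fin K → Fin n) //
        (univ.filter fun k => p.1 k = p.2 k) = S}
      ≃ {h : Fin K → Fin n × Fin n // ∀ k, ((h k).1 = (h k).2 ↔ k ∈ S)} := by
    apply Equiv.subtypeEquiv (Equiv.arrowProdEquivProdArrow (Fin K) (fun _ => Fin n) (fun _ => Fin n)).symm
    intro p
    constructor
    · intro h k
      have := Finset.ext_iff.mp h k
      simpa only [Finset.mem_filter, Finset.mem_univ, true_and,
        Equiv.arrowProdEquivProdArrow_symm_apply] using this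
    · intro h
      ext k
      simpa only [Finset.mem_filter, Finset.mem_univ, true_and,
        Equiv.arrowProdEquivProdArrow_symm_apply] using h k
  have e1 := emid.trans
    (@Equiv.subtypePiEquivPi (Fin K) (fun _ => Fin n × Fin n)
      (fun k q => q.1 = q.2 ↔ k ∈ S))
  rw [Fintype.card_congr e1, Fintype.card_pi, ← Finset.prod_mul_prod_compl S]
  congr 1
  · apply Finset.prod_congr rfl
    intro k hk
    rw [Fintype.card_congr (Equiv.subtypeEquivRight
      (q := fun q : Fin n × Fin n => q.1 = q.2) (fun q => by simp [hk]))]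
    exact card_diag n
  · apply Finset.prod_congr rfl
    intro k hk
    rw [Finset.mem_compl] at hk
    rw [Fintype.card_congr (Equiv.subtypeEquivRight
      (q := fun q : Fin n × Fin n => ¬ q.1 = q.2) (fun q => by simp [hk]))]
    exact card_offdiag n

end Pairs

section Alg
variable {K n : ℕ} {m : Fin K → ℕ} (ρB : Lam K m → ℝ)

lemma dS_cast (S : Finset (Fin K)) :
    (∏ x : {x : Fin K // x ∉ S}, m x : ℕ) = ∏ k ∈ Sᶜ, m k := by
  rw [← Finset.prod_subtype Sᶜ (fun x => Finset.mem_compl) (fun k => m k)]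

lemma cS_eq (S : Finset (Fin K)) :
    Fintype.card (LamS K m S) = ∏ k ∈ S, m k := by
  rw [card_lamS S]
  exact Finset.prod_coe_sort S m

lemma coeff_eq (hm : ∀ k, 1 ≤ m k) (hn : 1 ≤ n) (S : Finset (Fin K))
    (hfull : ∀ k ∈ Sᶜ, 2 ≤ n) :
    ((Fintype.card (Samp K n m) : ℝ))⁻¹
        * (((∏ k ∈ S, m k ^ (n - 1)) * ∏ k ∈ Sᶜ, m k ^ (n - 2) : ℕ) : ℝ)
      = (Fintype.card (LamS K m S) : ℝ)⁻¹
          * ((((∏ x : {x : Fin K // x ∉ S}, m x : ℕ)) : ℝ))⁻¹ ^ 2 := by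
  have hm0 : ∀ k, ((m k : ℝ)) ≠ 0 := fun k =>
    Nat.cast_ne_zero.mpr (Nat.pos_iff_ne_zero.mp (hm k))
  rw [card_samp, cS_eq, dS_cast]
  push_cast
  rw [← Finset.prod_mul_prod_compl S (fun k => (m k : ℝ) ^ n)]
  have h1 : (∏ k ∈ S, (m k : ℝ) ^ n)⁻¹ * ∏ k ∈ S, (m k : ℝ) ^ (n - 1)
      = (∏ k ∈ S, (m k : ℝ))⁻¹ := by
    rw [← Finset.prod_inv_distrib, ← Finset.prod_mul_distrib, ← Finset.prod_inv_distrib]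
    apply Finset.prod_congr rfl
    intro k _
    obtain ⟨p, hp⟩ : ∃ p, n = p + 1 := ⟨n - 1, (Nat.succ_pred_eq_of_pos hn).symm⟩
    rw [hp, Nat.add_sub_cancel, pow_succ, mul_inv, mul_right_comm,
      inv_mul_cancel₀ (pow_ne_zero p (hm0 k)), one_mul]
  have h2 : (∏ k ∈ Sᶜ, (m k : ℝ) ^ n)⁻¹ * ∏ k ∈ Sᶜ, (m k : ℝ) ^ (n - 2)
      = ((∏ k ∈ Sᶜ, (m k : ℝ))⁻¹) ^ 2 := by
    rw [← Finset.prod_inv_distrib, ← Finset.prod_mul_distrib, ← Finset.prod_inv_distrib,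
      ← Finset.prod_pow]
    apply Finset.prod_congr rfl
    intro k hk
    have hn2 : 2 ≤ n := hfull k hk
    obtain ⟨q, hq⟩ : ∃ q, n = q + 2 := ⟨n - 2, by omega⟩
    rw [hq, Nat.add_sub_cancel, pow_add, mul_inv, mul_right_comm,
      inv_mul_cancel₀ (pow_ne_zero q (hm0 k)), one_mul, inv_pow]
  calc ((∏ k ∈ S, (m k : ℝ) ^ n) * ∏ k ∈ Sᶜ, (m k : ℝ) ^ n)⁻¹
        * ((∏ k ∈ S, (m k : ℝ) ^ (n - 1)) * ∏ k ∈ Sᶜ, (m k : ℝ) ^ (n - 2))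
      = ((∏ k ∈ S, (m k : ℝ) ^ n)⁻¹ * ∏ k ∈ S, (m k : ℝ) ^ (n - 1))
          * ((∏ k ∈ Sᶜ, (m k : ℝ) ^ n)⁻¹ * ∏ k ∈ Sᶜ, (m k : ℝ) ^ (n - 2)) := by
        rw [mul_inv]; ring
    _ = (∏ k ∈ S, (m k : ℝ))⁻¹ * ((∏ k ∈ Sᶜ, (m k : ℝ))⁻¹) ^ 2 := by rw [h1, h2]

lemma second_moment_term (hm : ∀ k, 1 ≤ m k) (hn : 1 ≤ n)
    (i j : Fin K → Fin n) (S : Finset (Fin K)) (hS : ∀ k, i k = j k ↔ k ∈ S) :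
    ((Fintype.card (Samp K n m) : ℝ))⁻¹
        * ∑ ω : Samp K n m, ρB (fun k => ω k (i k)) * ρB (fun k => ω k (j k))
      = (Fintype.card (LamS K m S) : ℝ)⁻¹ * ∑ l : LamS K m S, (rhoS K m ρB S l) ^ 2 := by
  rw [sum_samp_two ρB i j S hS]
  have hfull : ∀ k ∈ Sᶜ, 2 ≤ n := by
    intro k hk
    have hij : i k ≠ j k := fun h => (Finset.mem_compl.mp hk) ((hS k).mp h)
    have hv : (i k).val ≠ (j k).val := fun h => hij (Fin.val_injective h)
    have h1 := (i k).isLt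
    have h2 := (j k).isLt
    omega
  have hco := coeff_eq hm hn S hfull
  calc ((Fintype.card (Samp K n m) : ℝ))⁻¹
        * ((((∏ k ∈ S, m k ^ (n - 1)) * ∏ k ∈ Sᶜ, m k ^ (n - 2) : ℕ) : ℝ)
            * ∑ l : LamS K m S, (Tsum ρB S l) ^ 2)
      = (((Fintype.card (Samp K n m) : ℝ))⁻¹
          * (((∏ k ∈ S, m k ^ (n - 1)) * ∏ k ∈ Sᶜ, m k ^ (n - 2) : ℕ) : ℝ))
          * ∑ l : LamS K m S, (Tsum ρB S l) ^ 2 := by ring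
    _ = (Fintype.card (LamS K m S) : ℝ)⁻¹
          * ∑ l : LamS K m S, (((∏ x : {x : Fin K // x ∉ S}, m x : ℕ) : ℝ))⁻¹ ^ 2
              * (Tsum ρB S l) ^ 2 := by
        rw [hco, ← Finset.mul_sum, mul_assoc]
    _ = (Fintype.card (LamS K m S) : ℝ)⁻¹ * ∑ l : LamS K m S, (rhoS K m ρB S l) ^ 2 := by
        congr 1
        apply Finset.sum_congr rfl
        intro l _
        rw [rhoS_eq, mul_pow]

lemma mean_rhoS (hm : ∀ k, 1 ≤ m k) (S : Finset (Fin K)) :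
    (Fintype.card (LamS K m S) : ℝ)⁻¹ * ∑ l : LamS K m S, rhoS K m ρB S l
      = lamMean K m ρB := by
  have hsum : ∑ l : LamS K m S, rhoS K m ρB S l
      = (((∏ x : {x : Fin K // x ∉ S}, m x : ℕ)) : ℝ)⁻¹ * ∑ b, ρB b := by
    simp only [rhoS_eq]
    rw [← Finset.mul_sum, sum_Tsum]
  rw [hsum, lamMean, ← mul_assoc, ← mul_inv, ← Nat.cast_mul, c_mul_d S]

lemma sigmaSq_eq (hm : ∀ k, 1 ≤ m k) (S : Finset (Fin K)) :
    sigmaSq K m ρB S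
      = (Fintype.card (LamS K m S) : ℝ)⁻¹ * (∑ l : LamS K m S, (rhoS K m ρB S l) ^ 2)
          - (lamMean K m ρB) ^ 2 := by
  have hc0 : ((Fintype.card (LamS K m S) : ℝ)) ≠ 0 :=
    Nat.cast_ne_zero.mpr (Nat.pos_iff_ne_zero.mp (lamS_card_pos K m hm S))
  have key : ∑ l : LamS K m S, rhoS K m ρB S l
      = (Fintype.card (LamS K m S) : ℝ) * lamMean K m ρB := by
    rw [← mean_rhoS ρB hm S, ← mul_assoc, mul_inv_cancel₀ hc0, one_mul]
  have expand : ∑ l : LamS K m S, (rhoS K m ρB S l - lamMean K m ρB) ^ 2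
      = (∑ l : LamS K m S, (rhoS K m ρB S l) ^ 2)
        - 2 * lamMean K m ρB * (∑ l : LamS K m S, rhoS K m ρB S l)
        + (Fintype.card (LamS K m S) : ℝ) * (lamMean K m ρB) ^ 2 := by
    rw [Finset.mul_sum]
    rw [show (Fintype.card (LamS K m S) : ℝ) * (lamMean K m ρB) ^ 2
        = ∑ _l : LamS K m S, (lamMean K m ρB) ^ 2 from by
      rw [Finset.sum_const, nsmul_eq_mul, Finset.card_univ]]
    rw [← Finset.sum_sub_distrib, ← Finset.sum_add_distrib]
    apply Finset.sum_congr rfl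
    intro l _
    ring
  rw [sigmaSq, expand, key]
  field_simp
  ring

lemma sigmaSq_empty : sigmaSq K m ρB ∅ = 0 := by
  have hfilter : (Finset.univ.filter
      (fun b : Lam K m => ∀ k : (∅ : Finset (Fin K)), b ↑k = (fun x => by
        exact absurd x.2 (Finset.notMem_empty _)) k)) = univ := by
    apply Finset.filter_true_of_mem
    intro b _
    intro k
    exact absurd k.2 (Finset.notMem_empty _)
  have hrho : ∀ l : LamS K m (∅ : Finset (Fin K)),
      rhoS K m ρB ∅ l = lamMean K m ρB := by
    intro l
    rw [rhoS, lamMean]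
    congr 1
    · congr 1
      rw [show (Finset.univ.filter
          (fun b : Lam K m => ∀ k : (∅ : Finset (Fin K)), b ↑k = l k)) = univ from
        Finset.filter_true_of_mem fun b _ k => absurd k.2 (Finset.notMem_empty _)]
      rw [Finset.card_univ]
    · rw [show (Finset.univ.filter
          (fun b : Lam K m => ∀ k : (∅ : Finset (Fin K)), b ↑k = l k)) = univ from
        Finset.filter_true_of_mem fun b _ k => absurd k.2 (Finset.notMem_empty _)]
  rw [sigmaSq]
  rw [Finset.sum_congr rfl fun l _ => by rw [hrho l]]
  simp

end Alg

/-- `Var[ρ_n] = Σ_{r=1}^{K} ((n−1)^{K−r}/n^K) Σ_{S ⊆ {1,…,K}, |S|=r} σ_S²`. -/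
theorem stmt2 (K n : ℕ) (hK : 1 ≤ K) (hn : 1 ≤ n) (m : Fin K → ℕ) (hm : ∀ k, 1 ≤ m k)
    (ρB : Lam K m → ℝ) :
    variance (est K n m ρB) (unif K n m)
      = ∑ r ∈ Finset.Icc 1 K,
          (((n : ℝ) - 1) ^ (K - r) / (n : ℝ) ^ K) *
            ∑ S ∈ (Finset.univ : Finset (Fin K)).powerset.filter (fun S => S.card = r),
              sigmaSq K m ρB S := by
  classical
  haveI hprob := unif_prob K n m hm
  have hnK : ((n : ℝ) ^ K) ≠ 0 :=
    pow_ne_zero _ (Nat.cast_ne_zero.mpr (by omega))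
  have hmem := memℒp_est K n m hm ρB
  rw [variance_eq_sub hmem]
  -- first moment
  have hco1 : ((Fintype.card (Samp K n m) : ℝ))⁻¹ * ((∏ k, m k ^ (n - 1) : ℕ) : ℝ)
      = ((Fintype.card (Lam K m) : ℝ))⁻¹ := by
    rw [card_samp, card_lam]
    push_cast
    rw [← Finset.prod_inv_distrib, ← Finset.prod_mul_distrib, ← Finset.prod_inv_distrib]
    apply Finset.prod_congr rfl
    intro k _
    have hm0 : ((m k : ℝ)) ≠ 0 := Nat.cast_ne_zero.mpr (Nat.pos_iff_ne_zero.mp (hm k))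
    obtain ⟨p, hp⟩ : ∃ p, n = p + 1 := ⟨n - 1, (Nat.succ_pred_eq_of_pos hn).symm⟩
    rw [hp, Nat.add_sub_cancel, pow_succ, mul_inv, mul_right_comm,
      inv_mul_cancel₀ (pow_ne_zero p hm0), one_mul]
  have hEX : ∫ ω, est K n m ρB ω ∂(unif K n m) = lamMean K m ρB := by
    rw [integral_unif K n m hm]
    have hswap : ∑ ω : Samp K n m, est K n m ρB ω
        = ((n : ℝ) ^ K)⁻¹
            * ∑ i : Fin K → Fin n, ∑ ω : Samp K n m, ρB (fun k => ω k (i k)) := by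
      simp only [est]
      rw [← Finset.mul_sum, Finset.sum_comm]
    rw [hswap, Finset.sum_congr rfl (fun i _ => sum_samp_one ρB i),
      Finset.sum_const, Finset.card_univ, nsmul_eq_mul, Fintype.card_fun,
      Fintype.card_fin, Fintype.card_fin, Nat.cast_pow, lamMean]
    calc (Fintype.card (Samp K n m) : ℝ)⁻¹
          * (((n : ℝ) ^ K)⁻¹ * ((n : ℝ) ^ K
              * (((∏ k, m k ^ (n - 1) : ℕ) : ℝ) * ∑ b, ρB b)))
        = ((Fintype.card (Samp K n m) : ℝ)⁻¹ * ((∏ k, m k ^ (n - 1) : ℕ) : ℝ))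
            * ((((n : ℝ) ^ K)⁻¹ * (n : ℝ) ^ K) * ∑ b, ρB b) := by push_cast; ring
      _ = (Fintype.card (Lam K m) : ℝ)⁻¹ * ∑ b, ρB b := by
          rw [hco1, inv_mul_cancel₀ hnK, one_mul]
  -- second moment
  have hEX2 : ∫ ω, (est K n m ρB ^ 2) ω ∂(unif K n m)
      = (((n : ℝ) ^ K)⁻¹) ^ 2
          * ∑ p : (Fin K → Fin n) × (Fin K → Fin n),
              ((Fintype.card (LamS K m (univ.filter fun k => p.1 k = p.2 k)) : ℝ)⁻¹
                * ∑ l, (rhoS K m ρB (univ.filter fun k => p.1 k = p.2 k) l) ^ 2) := by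
    rw [integral_unif K n m hm]
    have hexp : ∀ ω : Samp K n m, (est K n m ρB ^ 2) ω
        = (((n : ℝ) ^ K)⁻¹) ^ 2
            * ∑ p : (Fin K → Fin n) × (Fin K → Fin n),
                ρB (fun k => ω k (p.1 k)) * ρB (fun k => ω k (p.2 k)) := by
      intro ω
      rw [Pi.pow_apply, est, mul_pow,
        pow_two (∑ i : Fin K → Fin n, ρB fun k => ω k (i k)), Finset.sum_mul_sum,
        Fintype.sum_prod_type]
    rw [Finset.sum_congr rfl fun ω _ => hexp ω, ← Finset.mul_sum, Finset.sum_comm]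
    rw [mul_left_comm, Finset.mul_sum]
    congr 1
    apply Finset.sum_congr rfl
    intro p _
    exact second_moment_term ρB hm hn p.1 p.2 _ (fun k => by simp)
  rw [hEX, hEX2]
  -- subtract the mean inside the sum
  have hcardpair : ((Fintype.card ((Fin K → Fin n) × (Fin K → Fin n)) : ℝ))
      = ((n : ℝ) ^ K) ^ 2 := by
    rw [Fintype.card_prod, Fintype.card_fun, Fintype.card_fin, Fintype.card_fin]
    push_cast
    ring
  have hsub : (((n : ℝ) ^ K)⁻¹) ^ 2
        * (∑ p : (Fin K → Fin n) × (Fin K → Fin n),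
            ((Fintype.card (LamS K m (univ.filter fun k => p.1 k = p.2 k)) : ℝ)⁻¹
              * ∑ l, (rhoS K m ρB (univ.filter fun k => p.1 k = p.2 k) l) ^ 2))
        - lamMean K m ρB ^ 2
      = (((n : ℝ) ^ K)⁻¹) ^ 2
          * ∑ p : (Fin K → Fin n) × (Fin K → Fin n),
              (((Fintype.card (LamS K m (univ.filter fun k => p.1 k = p.2 k)) : ℝ)⁻¹
                * ∑ l, (rhoS K m ρB (univ.filter fun k => p.1 k = p.2 k) l) ^ 2)
                - lamMean K m ρB ^ 2) := by
    rw [Finset.sum_sub_distrib, Finset.sum_const, Finset.card_univ, nsmul_eq_mul,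
      hcardpair, mul_sub]
    congr 1
    rw [← mul_assoc]
    rw [show (((n : ℝ) ^ K)⁻¹) ^ 2 * ((n : ℝ) ^ K) ^ 2 = 1 from by
      rw [← mul_pow, inv_mul_cancel₀ hnK, one_pow]]
    rw [one_mul]
  rw [hsub]
  -- fiberwise grouping over S
  have hfib : ∑ p : (Fin K → Fin n) × (Fin K → Fin n),
        (((Fintype.card (LamS K m (univ.filter fun k => p.1 k = p.2 k)) : ℝ)⁻¹
          * ∑ l, (rhoS K m ρB (univ.filter fun k => p.1 k = p.2 k) l) ^ 2)
          - lamMean K m ρB ^ 2)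
      = ∑ S : Finset (Fin K),
          ((((∏ _k ∈ S, n) * ∏ _k ∈ Sᶜ, (n ^ 2 - n) : ℕ)) : ℝ) * sigmaSq K m ρB S := by
    rw [← Finset.sum_fiberwise univ
      (fun p : (Fin K → Fin n) × (Fin K → Fin n) => univ.filter fun k => p.1 k = p.2 k)
      (fun p => (((Fintype.card (LamS K m (univ.filter fun k => p.1 k = p.2 k)) : ℝ)⁻¹
          * ∑ l, (rhoS K m ρB (univ.filter fun k => p.1 k = p.2 k) l) ^ 2)
          - lamMean K m ρB ^ 2))]
    apply Finset.sum_congr rfl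
    intro S _
    have hin : ∀ p ∈ univ.filter (fun p : (Fin K → Fin n) × (Fin K → Fin n) =>
        (univ.filter fun k => p.1 k = p.2 k) = S),
        (((Fintype.card (LamS K m (univ.filter fun k => p.1 k = p.2 k)) : ℝ)⁻¹
          * ∑ l, (rhoS K m ρB (univ.filter fun k => p.1 k = p.2 k) l) ^ 2)
          - lamMean K m ρB ^ 2)
        = sigmaSq K m ρB S := by
      intro p hp
      have hps := (Finset.mem_filter.mp hp).2
      rw [sigmaSq_eq ρB hm S]
      congr 1 <;> rw [hps]
    rw [Finset.sum_congr rfl hin, Finset.sum_const, nsmul_eq_mul, card_pairs S]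
  rw [hfib, Finset.mul_sum]
  -- coefficient simplification
  have hcoefS : ∀ S : Finset (Fin K),
      (((n : ℝ) ^ K)⁻¹) ^ 2 * (((((∏ _k ∈ S, n) * ∏ _k ∈ Sᶜ, (n ^ 2 - n) : ℕ)) : ℝ)
          * sigmaSq K m ρB S)
      = (((n : ℝ) - 1) ^ (K - S.card) / (n : ℝ) ^ K) * sigmaSq K m ρB S := by
    intro S
    have hsK : S.card ≤ K := by
      have := Finset.card_le_univ S
      simpa using this
    have hcast : (((∏ _k ∈ S, n) * ∏ _k ∈ Sᶜ, (n ^ 2 - n) : ℕ) : ℝ)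
        = (n : ℝ) ^ S.card * ((n : ℝ) * ((n : ℝ) - 1)) ^ (K - S.card) := by
      push_cast [Nat.cast_sub (Nat.le_self_pow (by norm_num : (2:ℕ) ≠ 0) n)]
      rw [Finset.prod_const, Finset.prod_const, Finset.card_compl, Fintype.card_fin]
      rw [show ((n:ℝ) ^ 2 - (n:ℝ)) = (n:ℝ) * ((n:ℝ) - 1) from by ring]
    rw [hcast, mul_pow (n : ℝ) ((n : ℝ) - 1)]
    have hpow : (n : ℝ) ^ S.card * (n : ℝ) ^ (K - S.card) = (n : ℝ) ^ K := by
      rw [← pow_add, Nat.add_sub_cancel' hsK]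
    rw [show (((n : ℝ) ^ K)⁻¹) ^ 2
          * ((n : ℝ) ^ S.card * ((n : ℝ) ^ (K - S.card) * ((n : ℝ) - 1) ^ (K - S.card))
            * sigmaSq K m ρB S)
        = (((n : ℝ) ^ S.card * (n : ℝ) ^ (K - S.card)) * ((n : ℝ) ^ K)⁻¹)
            * ((((n : ℝ) ^ K)⁻¹ * ((n : ℝ) - 1) ^ (K - S.card)) * sigmaSq K m ρB S) from by
      ring]
    rw [hpow, mul_inv_cancel₀ hnK, one_mul, div_eq_mul_inv, mul_comm (((n:ℝ) - 1) ^ (K - S.card))]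
  rw [Finset.sum_congr rfl fun S _ => hcoefS S]
  -- regroup by cardinality
  have hmaps : ∀ S ∈ (univ : Finset (Finset (Fin K))), S.card ∈ Finset.range (K + 1) := by
    intro S _
    rw [Finset.mem_range, Nat.lt_succ_iff]
    have := Finset.card_le_univ S
    simpa using this
  rw [← Finset.sum_fiberwise_of_maps_to hmaps
    (fun S => (((n : ℝ) - 1) ^ (K - S.card) / (n : ℝ) ^ K) * sigmaSq K m ρB S)]
  have hrange : Finset.range (K + 1) = insert 0 (Finset.Icc 1 K) := by
    ext r
    simp [Nat.lt_succ_iff]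
    omega
  rw [hrange, Finset.sum_insert (by simp)]
  have hzero : ∑ S ∈ univ.filter (fun S : Finset (Fin K) => S.card = 0),
      (((n : ℝ) - 1) ^ (K - S.card) / (n : ℝ) ^ K) * sigmaSq K m ρB S = 0 := by
    rw [show (univ.filter fun S : Finset (Fin K) => S.card = 0) = {∅} from by
      ext S
      simp [Finset.card_eq_zero]]
    rw [Finset.sum_singleton, sigmaSq_empty, mul_zero]
  rw [hzero, zero_add]
  apply Finset.sum_congr rfl
  intro r hr
  have hinner : ∀ S ∈ univ.filter (fun S : Finset (Fin K) => S.card = r),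
      (((n : ℝ) - 1) ^ (K - S.card) / (n : ℝ) ^ K) * sigmaSq K m ρB S
      = (((n : ℝ) - 1) ^ (K - r) / (n : ℝ) ^ K) * sigmaSq K m ρB S := by
    intro S hS
    rw [(Finset.mem_filter.mp hS).2]
  rw [Finset.sum_congr rfl hinner, ← Finset.mul_sum, Finset.powerset_univ]

end
end

section
/- Let J ⊆ {1,…,K} and let j ∈ {1,…,K} with j ∉ J. Then S_ρ²(J, n) ≤ S_ρ²(J ∪ {j}, n), where for any subset T ⊆ {1,…,K} one defines S_ρ²(T, n) = Σ_{r=1}^{|T|} (1 − 1/n)^{|T|−r} (1/n)^r Σ_{S ⊆ T, |S| = r} σ_S². -/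
open MeasureTheory ProbabilityTheory Finset

noncomputable section

/-- `S_ρ²(T, n) = Σ_{r=1}^{|T|} (1 − 1/n)^{|T|−r} (1/n)^r Σ_{S ⊆ T, |S| = r} σ_S²`. -/
def Ssq (K n : ℕ) (m : Fin K → ℕ) (ρB : Lam K m → ℝ) (T : Finset (Fin K)) : ℝ :=
  ∑ r ∈ Finset.Icc 1 T.card,
    (1 - (n : ℝ)⁻¹) ^ (T.card - r) * ((n : ℝ)⁻¹) ^ r *
      ∑ S ∈ T.powerset.filter (fun S => S.card = r), sigmaSq K m ρB S

section Aux

variable {K : ℕ} {m : Fin K → ℕ} {S : Finset (Fin K)} {j : Fin K}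
variable {K : ℕ} {m : Fin K → ℕ} {S : Finset (Fin K)} {j : Fin K}

def fib (K : ℕ) (m : Fin K → ℕ) (S : Finset (Fin K)) (l : LamS K m S) : Finset (Lam K m) :=
  Finset.univ.filter (fun b : Lam K m => ∀ k : S, b ↑k = l k)

def fibEquiv (l : LamS K m S) :
    {b : Lam K m // ∀ k : S, b ↑k = l k} ≃ (∀ k : (Sᶜ : Finset (Fin K)), Fin (m k)) where
  toFun b k := b.1 k
  invFun f := ⟨fun k => if h : k ∈ S then l ⟨k, h⟩ else f ⟨k, Finset.mem_compl.mpr h⟩,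
    fun k => by simp [k.2]⟩
  left_inv b := by
    apply Subtype.ext
    funext k
    by_cases h : k ∈ S
    · simp only [dif_pos h]; exact (b.2 ⟨k, h⟩).symm
    · simp [h]
  right_inv f := by
    funext k
    have hk : (k : Fin K) ∉ S := Finset.mem_compl.mp k.2
    simp [hk]

lemma card_fib (l : LamS K m S) : (fib K m S l).card = ∏ k ∈ Sᶜ, m k := by
  rw [fib, ← Fintype.card_subtype, Fintype.card_congr (fibEquiv l), Fintype.card_pi]
  simp [← Finset.prod_attach Sᶜ (fun k => m k)]

lemma card_LamS : Fintype.card (LamS K m S) = ∏ k ∈ S, m k := by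
  rw [Fintype.card_congr (show LamS K m S ≃ ∀ k : S, Fin (m k) from
    ⟨id, id, fun _ => rfl, fun _ => rfl⟩), Fintype.card_pi]
  simp [← Finset.prod_attach S (fun k => m k)]

def extL (hj : j ∉ S) (l : LamS K m S) (t : Fin (m j)) : LamS K m (insert j S) :=
  fun k => if h : (k : Fin K) ∈ S then l ⟨k, h⟩ else
    cast (congrArg (fun i => Fin (m i))
      (show j = (k : Fin K) by
        have := k.2; rw [Finset.mem_insert] at this; tauto)) t

lemma extL_apply_mem (hj : j ∉ S) (l : LamS K m S) (t : Fin (m j)) (k : Fin K) (hk : k ∈ S) :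
    extL hj l t ⟨k, Finset.mem_insert_of_mem hk⟩ = l ⟨k, hk⟩ := dif_pos hk

lemma extL_apply_self (hj : j ∉ S) (l : LamS K m S) (t : Fin (m j)) :
    extL hj l t ⟨j, Finset.mem_insert_self j S⟩ = t := by
  rw [extL, dif_neg hj]
  rfl

def extEquiv (hj : j ∉ S) : LamS K m S × Fin (m j) ≃ LamS K m (insert j S) where
  toFun p := extL hj p.1 p.2
  invFun l' := (fun k => l' ⟨k, Finset.mem_insert_of_mem k.2⟩, l' ⟨j, Finset.mem_insert_self j S⟩)
  left_inv p := by
    refine Prod.ext ?_ ?_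
    · funext k; exact extL_apply_mem hj p.1 p.2 k k.2
    · exact extL_apply_self hj p.1 p.2
  right_inv l' := by
    funext k
    rcases Finset.mem_insert.mp k.2 with h | h
    · have hk : k = ⟨j, Finset.mem_insert_self j S⟩ := Subtype.ext h
      rw [hk]
      exact extL_apply_self hj _ _
    · have hk : k = ⟨(k : Fin K), Finset.mem_insert_of_mem h⟩ := Subtype.ext rfl
      rw [hk]
      exact extL_apply_mem hj _ _ _ h

lemma fib_extL (hj : j ∉ S) (l : LamS K m S) (t : Fin (m j)) :
    fib K m (insert j S) (extL hj l t) = (fib K m S l).filter (fun b => b j = t) := by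
  ext b
  simp only [fib, Finset.mem_filter, Finset.mem_univ, true_and]
  constructor
  · intro H
    refine ⟨fun k => ?_, ?_⟩
    · rw [H ⟨k, Finset.mem_insert_of_mem k.2⟩, extL_apply_mem hj l t k k.2]
    · rw [H ⟨j, Finset.mem_insert_self j S⟩, extL_apply_self]
  · rintro ⟨H1, H2⟩ k
    rcases Finset.mem_insert.mp k.2 with h | h
    · have hk : k = ⟨j, Finset.mem_insert_self j S⟩ := Subtype.ext h
      rw [hk, extL_apply_self]; exact H2
    · have hk : k = ⟨(k : Fin K), Finset.mem_insert_of_mem h⟩ := Subtype.ext rfl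
      rw [hk, extL_apply_mem hj l t _ h]; exact H1 ⟨_, h⟩

lemma sum_fib_split (hj : j ∉ S) (l : LamS K m S) (f : Lam K m → ℝ) :
    ∑ b ∈ fib K m S l, f b = ∑ t : Fin (m j), ∑ b ∈ fib K m (insert j S) (extL hj l t), f b := by
  rw [← Finset.sum_fiberwise_of_maps_to (g := fun b => b j) (t := Finset.univ)
    (fun x _ => Finset.mem_univ _) f]
  exact Finset.sum_congr rfl fun t _ => by rw [fib_extL]
variable {ρB : Lam K m → ℝ}

lemma rhoS_eq_s7 (l : LamS K m S) :
    rhoS K m ρB S l = ((fib K m S l).card : ℝ)⁻¹ * ∑ b ∈ fib K m S l, ρB b := rfl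

lemma rhoS_split (hm : ∀ k, 1 ≤ m k) (hj : j ∉ S) (l : LamS K m S) :
    rhoS K m ρB S l = (m j : ℝ)⁻¹ * ∑ t : Fin (m j), rhoS K m ρB (insert j S) (extL hj l t) := by
  have hc' : 0 < ∏ k ∈ (insert j S)ᶜ, m k := Finset.prod_pos fun k _ => hm k
  have hmj : 0 < m j := hm j
  have hcard : (fib K m S l).card = m j * ∏ k ∈ (insert j S)ᶜ, m k := by
    rw [card_fib, Finset.compl_insert, Finset.mul_prod_erase _ _ (Finset.mem_compl.mpr hj)]
  have hsum : ∑ b ∈ fib K m S l, ρB b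
      = ∑ t : Fin (m j), ∑ b ∈ fib K m (insert j S) (extL hj l t), ρB b :=
    sum_fib_split hj l ρB
  have hrho' : ∀ t, ∑ b ∈ fib K m (insert j S) (extL hj l t), ρB b
      = (∏ k ∈ (insert j S)ᶜ, m k : ℕ) * rhoS K m ρB (insert j S) (extL hj l t) := by
    intro t
    have h2 : ((∏ k ∈ (insert j S)ᶜ, m k : ℕ) : ℝ) ≠ 0 := by exact_mod_cast hc'.ne'
    rw [rhoS_eq_s7, card_fib]
    exact (mul_inv_cancel_left₀ h2 _).symm
  rw [rhoS_eq_s7, hcard, hsum]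
  rw [Finset.sum_congr rfl fun t _ => hrho' t, ← Finset.mul_sum]
  have h2 : ((∏ k ∈ (insert j S)ᶜ, m k : ℕ) : ℝ) ≠ 0 := by exact_mod_cast hc'.ne'
  rw [Nat.cast_mul, mul_inv, mul_assoc, inv_mul_cancel_left₀ h2]

lemma sigmaSq_nonneg : 0 ≤ sigmaSq K m ρB S := by
  unfold sigmaSq
  positivity

lemma sigmaSq_mono (hm : ∀ k, 1 ≤ m k) (hj : j ∉ S) :
    sigmaSq K m ρB S ≤ sigmaSq K m ρB (insert j S) := by
  set ρ := lamMean K m ρB with hρ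
  have hmj : (0:ℝ) < m j := by exact_mod_cast hm j
  have hA : (0:ℝ) < Fintype.card (LamS K m S) := by
    rw [card_LamS]; exact_mod_cast Finset.prod_pos fun k _ => hm k
  have hA' : (Fintype.card (LamS K m (insert j S)) : ℝ)
      = m j * Fintype.card (LamS K m S) := by
    rw [card_LamS, card_LamS, Finset.prod_insert hj]; push_cast; ring
  -- pointwise bound
  have hpt : ∀ l : LamS K m S, (rhoS K m ρB S l - ρ) ^ 2
      ≤ (m j : ℝ)⁻¹ * ∑ t : Fin (m j), (rhoS K m ρB (insert j S) (extL hj l t) - ρ) ^ 2 := by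
    intro l
    have hdev : rhoS K m ρB S l - ρ
        = (m j : ℝ)⁻¹ * ∑ t : Fin (m j), (rhoS K m ρB (insert j S) (extL hj l t) - ρ) := by
      rw [rhoS_split hm hj l, Finset.sum_sub_distrib, Finset.sum_const, Finset.card_univ,
        Fintype.card_fin]
      field_simp
      rw [nsmul_eq_mul]
    rw [hdev, mul_pow]
    have hcs := sq_sum_le_card_mul_sum_sq
      (s := (Finset.univ : Finset (Fin (m j))))
      (f := fun t => rhoS K m ρB (insert j S) (extL hj l t) - ρ)
    rw [Finset.card_univ, Fintype.card_fin] at hcs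
    calc ((m j:ℝ)⁻¹) ^ 2 * (∑ t : Fin (m j), (rhoS K m ρB (insert j S) (extL hj l t) - ρ)) ^ 2
        ≤ ((m j:ℝ)⁻¹) ^ 2 * ((m j : ℝ) * ∑ t : Fin (m j),
            (rhoS K m ρB (insert j S) (extL hj l t) - ρ) ^ 2) := by
          gcongr
      _ = (m j : ℝ)⁻¹ * ∑ t : Fin (m j),
            (rhoS K m ρB (insert j S) (extL hj l t) - ρ) ^ 2 := by
          field_simp
  -- reindex the big sum
  have hre : ∑ l' : LamS K m (insert j S), (rhoS K m ρB (insert j S) l' - ρ) ^ 2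
      = ∑ l : LamS K m S, ∑ t : Fin (m j),
          (rhoS K m ρB (insert j S) (extL hj l t) - ρ) ^ 2 := by
    rw [← (extEquiv hj).sum_comp (fun l' => (rhoS K m ρB (insert j S) l' - ρ) ^ 2)]
    rw [Fintype.sum_prod_type]
    rfl
  unfold sigmaSq
  rw [← hρ, hre, hA']
  calc (Fintype.card (LamS K m S) : ℝ)⁻¹ * ∑ l : LamS K m S, (rhoS K m ρB S l - ρ) ^ 2
      ≤ (Fintype.card (LamS K m S) : ℝ)⁻¹ * ∑ l : LamS K m S, (m j : ℝ)⁻¹ *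
          ∑ t : Fin (m j), (rhoS K m ρB (insert j S) (extL hj l t) - ρ) ^ 2 := by
        gcongr with l _
        exact hpt l
    _ = ((m j : ℝ) * Fintype.card (LamS K m S))⁻¹ * ∑ l : LamS K m S,
          ∑ t : Fin (m j), (rhoS K m ρB (insert j S) (extL hj l t) - ρ) ^ 2 := by
        rw [← Finset.mul_sum, mul_inv]
        ring

end Aux

/-- `S_ρ²(J, n) ≤ S_ρ²(J ∪ {j}, n)` for `j ∉ J`. -/
theorem stmt7 (K n : ℕ) (hK : 1 ≤ K) (hn : 1 ≤ n) (m : Fin K → ℕ) (hm : ∀ k, 1 ≤ m k)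
    (ρB : Lam K m → ℝ) (J : Finset (Fin K)) (j : Fin K) (hj : j ∉ J) :
    Ssq K n m ρB J ≤ Ssq K n m ρB (insert j J) := by
  classical
  set q : ℝ := (n : ℝ)⁻¹ with hq
  have hq0 : 0 ≤ q := by positivity
  have hq1 : q ≤ 1 := by
    rw [hq]
    have : (1:ℝ) ≤ n := by exact_mod_cast hn
    exact inv_le_one_of_one_le₀ this
  have hp0 : 0 ≤ 1 - q := by linarith
  set c := J.card with hc
  have hcard' : (insert j J).card = c + 1 := Finset.card_insert_of_notMem hj
  set A : ℕ → ℝ := fun r => ∑ S ∈ J.powerset.filter (fun S => S.card = r), sigmaSq K m ρB S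
    with hA
  set B : ℕ → ℝ :=
    fun i => ∑ S ∈ J.powerset.filter (fun S => S.card = i), sigmaSq K m ρB (insert j S) with hB
  have hAB : ∀ i, A i ≤ B i := by
    intro i
    apply Finset.sum_le_sum
    intro S hS
    have hjS : j ∉ S := fun h =>
      hj (Finset.mem_powerset.mp (Finset.mem_filter.mp hS).1 h)
    exact sigmaSq_mono hm hjS
  have hB0 : ∀ i, 0 ≤ B i := fun i =>
    Finset.sum_nonneg fun S _ => sigmaSq_nonneg
  -- split of the inner sum for `insert j J`
  have hsplit : ∀ r, ∑ S ∈ (insert j J).powerset.filter (fun S => S.card = r),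
      sigmaSq K m ρB S
      = A r + ∑ S ∈ J.powerset.filter (fun S => S.card + 1 = r),
          sigmaSq K m ρB (insert j S) := by
    intro r
    have hdisj : Disjoint (J.powerset.filter (fun S => S.card = r))
        ((J.powerset.image (insert j)).filter (fun S => S.card = r)) := by
      rw [Finset.disjoint_left]
      intro S hS hS'
      have h1 : j ∉ S := fun h =>
        hj (Finset.mem_powerset.mp (Finset.mem_filter.mp hS).1 h)
      obtain ⟨T, _, hT2⟩ := Finset.mem_image.mp (Finset.mem_filter.mp hS').1
      exact h1 (hT2 ▸ Finset.mem_insert_self j T)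
    rw [Finset.powerset_insert, Finset.filter_union, Finset.sum_union hdisj]
    congr 1
    rw [Finset.filter_image]
    rw [Finset.sum_image (fun x hx y hy hxy => by
      have hx' : j ∉ x := fun h => hj (Finset.mem_powerset.mp (Finset.mem_filter.mp hx).1 h)
      have hy' : j ∉ y := fun h => hj (Finset.mem_powerset.mp (Finset.mem_filter.mp hy).1 h)
      rw [← Finset.erase_insert hx', hxy, Finset.erase_insert hy'])]
    apply Finset.sum_congr
    · apply Finset.filter_congr
      intro S hS
      have hjS : j ∉ S := fun h => hj (Finset.mem_powerset.mp hS h)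
      rw [Finset.card_insert_of_notMem hjS]
    · intros; rfl
  -- main identity
  have hmain : Ssq K n m ρB (insert j J)
      = (1 - q) * Ssq K n m ρB J
        + ∑ i ∈ Finset.range (c + 1), (1 - q) ^ (c - i) * q ^ (i + 1) * B i := by
    rw [Ssq, hcard']
    have : ∀ r ∈ Finset.Icc 1 (c+1),
        (1 - q) ^ (c + 1 - r) * q ^ r *
          ∑ S ∈ (insert j J).powerset.filter (fun S => S.card = r), sigmaSq K m ρB S
        = (1 - q) ^ (c + 1 - r) * q ^ r * A r
          + (1 - q) ^ (c + 1 - r) * q ^ r *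
              ∑ S ∈ J.powerset.filter (fun S => S.card + 1 = r),
                sigmaSq K m ρB (insert j S) := by
      intro r _
      rw [hsplit r, mul_add]
    rw [Finset.sum_congr rfl this, Finset.sum_add_distrib]
    congr 1
    · -- first piece equals (1-q) * Ssq J
      rw [Finset.sum_Icc_succ_top (Nat.le_add_left 1 c)]
      have hA0 : A (c + 1) = 0 := by
        rw [hA]
        simp only
        rw [Finset.filter_eq_empty_iff.mpr, Finset.sum_empty]
        intro S hS
        have := Finset.card_le_card (Finset.mem_powerset.mp hS)
        omega
      rw [hA0, mul_zero, add_zero, Ssq, ← hc, Finset.mul_sum]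
      apply Finset.sum_congr rfl
      intro r hr
      have hr' : r ≤ c := (Finset.mem_Icc.mp hr).2
      have : c + 1 - r = (c - r) + 1 := by omega
      rw [this, pow_succ]
      ring
    · -- second piece: reindex
      rw [show Finset.Icc 1 (c+1) = Finset.Ico 1 (c+2) by rw [← Finset.Ico_add_one_right_eq_Icc]; rfl,
        Finset.sum_Ico_eq_sum_range]
      have hn' : c + 2 - 1 = c + 1 := by omega
      rw [hn']
      apply Finset.sum_congr rfl
      intro i hi
      have hi' : i ≤ c := by
        have := Finset.mem_range.mp hi; omega
      have h1 : c + 1 - (1 + i) = c - i := by omega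
      have h2 : (J.powerset.filter (fun S => S.card + 1 = 1 + i))
          = J.powerset.filter (fun S => S.card = i) := by
        apply Finset.filter_congr
        intro S _
        constructor <;> intro h <;> omega
      rw [h1, h2]
      rw [hB]
      simp only
      have : q ^ (1 + i) = q ^ (i + 1) := by rw [add_comm]
      rw [this]
  -- lower bound on the second piece
  have hT2 : q * Ssq K n m ρB J
      ≤ ∑ i ∈ Finset.range (c + 1), (1 - q) ^ (c - i) * q ^ (i + 1) * B i := by
    have h1 : q * Ssq K n m ρB J
        = ∑ r ∈ Finset.Icc 1 c, (1 - q) ^ (c - r) * q ^ (r + 1) * A r := by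
      rw [Ssq, ← hc, Finset.mul_sum]
      apply Finset.sum_congr rfl
      intro r _
      rw [pow_succ]
      ring
    rw [h1]
    calc ∑ r ∈ Finset.Icc 1 c, (1 - q) ^ (c - r) * q ^ (r + 1) * A r
        ≤ ∑ r ∈ Finset.Icc 1 c, (1 - q) ^ (c - r) * q ^ (r + 1) * B r := by
          apply Finset.sum_le_sum
          intro r _
          have hw : 0 ≤ (1 - q) ^ (c - r) * q ^ (r + 1) := by positivity
          exact mul_le_mul_of_nonneg_left (hAB r) hw
      _ ≤ ∑ i ∈ Finset.range (c + 1), (1 - q) ^ (c - i) * q ^ (i + 1) * B i := by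
          apply Finset.sum_le_sum_of_subset_of_nonneg
          · intro r hr
            rw [Finset.mem_range]
            have := (Finset.mem_Icc.mp hr).2; omega
          · intro i _ _
            have hw : 0 ≤ (1 - q) ^ (c - i) * q ^ (i + 1) := by positivity
            exact mul_nonneg hw (hB0 i)
  have hid : (1 - q) * Ssq K n m ρB J + q * Ssq K n m ρB J = Ssq K n m ρB J := by ring
  linarith [hmain, hT2]


end
end
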